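/- Positivity of the partition function at small negative activities: if μ, p : P → ℝ≥0 satisfy p_x · Z_{Γ*(x)}(μ) ≤ μ_x for all x ∈ P, then Z_Λ(−p) > 0 for every Λ ⊆ P, and moreover for every x ∈ Λ, Z_{Λ\{x}}(−p) ≤ (1 + μ_x) · Z_Λ(−p). -/

import Mathlib

open Finset

def indepSet {P : Type*} [DecidableEq P] (W : P → P → ℕ) (S : Finset P) : Prop :=
  ∀ x ∈ S, ∀ y ∈ S, x ≠ y → W x y = 1

instance {P : Type*} [DecidableEq P] (W : P → P → ℕ) : DecidablePred (indepSet W) :=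
  fun _ => by unfold indepSet; infer_instance

/-- Polymer partition function `Z_Λ(a) = Σ_{S ⊆ Λ independent} Π_{y ∈ S} a y`. -/
def Zpart {P : Type*} [DecidableEq P] {R : Type*} [CommRing R] (W : P → P → ℕ)
    (Λ : Finset P) (a : P → R) : R :=
  ∑ S ∈ Λ.powerset.filter (indepSet W), ∏ y ∈ S, a y

/-- `Γ*(x)`: the set of polymers incompatible with `x`. -/
def Γstar {P : Type*} [Fintype P] [DecidableEq P] (W : P → P → ℕ) (x : P) : Finset P :=
  Finset.univ.filter fun y => W x y = 0

/-!
Let `β` be the maximum of `f(S) = Z_{Λ \ S}(-p) / Z_S(μ)` over all `S`. If `insert x S` with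
`x ∉ S` is a maximiser, so is `S`: expand both `Z_{Λ \ S}(-p)` and `Z_{insert x S}(μ)` by the
recursion `Z_N = Z_{N \ {x}} + a_x Z_{N \ Γ*(x)}`, bound `f(S ∪ Γ*(x)) ≤ β`, and use
`Z_{S ∪ Γ*(x)}(μ) ≤ Z_{S \ Γ*(x)}(μ) Z_{Γ*(x)}(μ)` together with `p_x Z_{Γ*(x)}(μ) ≤ μ_x`.
Hence `∅` is a maximiser, that is `Z_{Λ \ S}(-p) ≤ Z_S(μ) Z_Λ(-p)` for every `S`. The case
`S = Λ` gives `Z_Λ(-p) ≥ 1 / Z_Λ(μ) > 0`, and the case `S = Γ*(x)`, inserted in the recursion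
for `Z_Λ(-p)`, gives the bound on `Z_{Λ \ {x}}(-p)`.
-/

section Independence

variable {P : Type*} [DecidableEq P] {W : P → P → ℕ}

theorem indepSet_empty : indepSet W ∅ := by
  simp [indepSet]

theorem indepSet.mono {S T : Finset P} (hT : indepSet W T) (hST : S ⊆ T) : indepSet W S :=
  fun x hx y hy => hT x (hST hx) y (hST hy)

theorem indepSet_insert_iff (hsym : ∀ x y, W x y = W y x) {x : P} {S : Finset P}
    (hx : x ∉ S) : indepSet W (insert x S) ↔ indepSet W S ∧ ∀ y ∈ S, W x y = 1 := by
  refine ⟨fun h => ⟨h.mono (subset_insert x S), fun y hy =>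
    h x (mem_insert_self x S) y (mem_insert_of_mem hy) (ne_of_mem_of_not_mem hy hx).symm⟩, ?_⟩
  rintro ⟨hS, hxS⟩ u hu v hv huv
  rcases mem_insert.1 hu with rfl | hu'
  · exact hxS v ((mem_insert.1 hv).resolve_left huv.symm)
  rcases mem_insert.1 hv with rfl | hv'
  · rw [hsym]; exact hxS u hu'
  · exact hS u hu' v hv' huv

end Independence

section PartitionFunction

variable {P : Type*} [DecidableEq P] {R : Type*} [CommRing R] (W : P → P → ℕ)

@[simp]
theorem Zpart_empty (a : P → R) : Zpart W ∅ a = 1 := by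
  simp [Zpart, filter_singleton, indepSet_empty]

theorem Zpart_eq_sum_ite (Λ : Finset P) (a : P → R) :
    Zpart W Λ a = ∑ S ∈ Λ.powerset, if indepSet W S then ∏ y ∈ S, a y else 0 :=
  sum_filter _ _

variable [PartialOrder R] [IsOrderedRing R] {a : P → R}

theorem Zpart_mono (ha : ∀ y, 0 ≤ a y) {A B : Finset P} (hAB : A ⊆ B) :
    Zpart W A a ≤ Zpart W B a :=
  sum_le_sum_of_subset_of_nonneg (filter_subset_filter _ (powerset_mono.2 hAB))
    fun _ _ _ => prod_nonneg fun y _ => ha y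

theorem one_le_Zpart (ha : ∀ y, 0 ≤ a y) (Λ : Finset P) : 1 ≤ Zpart W Λ a :=
  Zpart_empty W a ▸ Zpart_mono W ha (empty_subset Λ)

theorem Zpart_pos [Nontrivial R] (ha : ∀ y, 0 ≤ a y) (Λ : Finset P) : 0 < Zpart W Λ a :=
  zero_lt_one.trans_le (one_le_Zpart W ha Λ)

/-- An independent `U ⊆ T` splits into the independent sets `U ∩ A ⊆ A` and `U \ A ⊆ B`,
from which it is recovered. -/
theorem Zpart_le_mul_of_subset_union (ha : ∀ y, 0 ≤ a y) {T A B : Finset P}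
    (hT : T ⊆ A ∪ B) : Zpart W T a ≤ Zpart W A a * Zpart W B a := by
  rw [Zpart, Zpart, Zpart, sum_mul_sum, ← sum_product', sum_congr rfl fun U _ => (prod_inter_mul_prod_sdiff U A a).symm]
  rw [← sum_image (g := fun U => (U ∩ A, U \ A)) (f := fun V => (∏ y ∈ V.1, a y) * ∏ y ∈ V.2, a y)]
  · refine sum_le_sum_of_subset_of_nonneg ?_ fun V _ _ =>
      mul_nonneg (prod_nonneg fun y _ => ha y) (prod_nonneg fun y _ => ha y)
    simp only [subset_iff, mem_image, mem_filter, mem_powerset, mem_product]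
    rintro _ ⟨U, ⟨hUT, hU⟩, rfl⟩
    refine ⟨⟨inter_subset_right, hU.mono inter_subset_left⟩, ?_, hU.mono sdiff_subset⟩
    exact sdiff_le_iff.2 (subset_trans hUT hT)
  · intro U _ V _ h
    simp only [Prod.mk.injEq] at h
    rw [← sdiff_union_inter U A, ← sdiff_union_inter V A, h.1, h.2]

end PartitionFunction

section Recursion

variable {P : Type*} [Fintype P] [DecidableEq P] {W : P → P → ℕ}

theorem disjoint_Γstar_iff (h01 : ∀ x y, W x y = 0 ∨ W x y = 1) {x : P} {S : Finset P} :
    Disjoint S (Γstar W x) ↔ ∀ y ∈ S, W x y = 1 := by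
  simp only [disjoint_left, Γstar, mem_filter, mem_univ, true_and]
  exact forall₂_congr fun y _ => (h01 x y).elim (by simp [·]) (by simp [·])

/-- An independent subset of `N` either avoids `x`, or is `x` together with an independent
subset of `N \ Γ*(x)`. -/
theorem Zpart_eq_Zpart_erase_add {R : Type*} [CommRing R] (hsym : ∀ x y, W x y = W y x)
    (hdiag : ∀ x, W x x = 0) (h01 : ∀ x y, W x y = 0 ∨ W x y = 1) (a : P → R)
    {N : Finset P} {x : P} (hx : x ∈ N) :
    Zpart W N a = Zpart W (N.erase x) a + a x * Zpart W (N \ Γstar W x) a := by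
  have hxΓ : x ∈ Γstar W x := by simp [Γstar, hdiag]
  have hpowerset : (N.erase x).powerset.filter (Disjoint · (Γstar W x)) =
      (N \ Γstar W x).powerset := by
    ext S
    simp only [mem_filter, mem_powerset, subset_sdiff, subset_erase]
    exact ⟨fun h => ⟨h.1.1, h.2⟩, fun h => ⟨⟨h.1, disjoint_right.1 h.2 hxΓ⟩, h.2⟩⟩
  conv_lhs => rw [← insert_erase hx]
  rw [Zpart_eq_sum_ite, sum_powerset_insert (notMem_erase x N), ← Zpart_eq_sum_ite,
    Zpart_eq_sum_ite W (N \ Γstar W x), ← hpowerset, sum_filter, mul_sum]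
  congr 1
  refine sum_congr rfl fun S hS => ?_
  have hxS : x ∉ S := fun h => notMem_erase x N (mem_powerset.1 hS h)
  have hindep := (indepSet_insert_iff hsym hxS).trans
    (and_congr_right' (disjoint_Γstar_iff h01).symm)
  rw [prod_insert hxS]
  by_cases hd : Disjoint S (Γstar W x) <;> by_cases hi : indepSet W S <;> simp [hd, hi, hindep]

end Recursion

section NegativeActivities

variable {P : Type*} [Fintype P] [DecidableEq P] {W : P → P → ℕ} {μ p : P → ℝ}

/-- If `β` bounds `Z_{Λ \ T}(-p) / Z_T(μ)` for all `T` and is attained at `insert x S`, then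
it is attained at `S`. -/
theorem mul_Zpart_le_Zpart_sdiff_of_insert (hsym : ∀ x y, W x y = W y x)
    (hdiag : ∀ x, W x x = 0) (h01 : ∀ x y, W x y = 0 ∨ W x y = 1) (hμ : ∀ x, 0 ≤ μ x)
    (hp : ∀ x, 0 ≤ p x) (hFP : ∀ x, p x * Zpart W (Γstar W x) μ ≤ μ x)
    {Λ S : Finset P} {x : P} (hxS : x ∉ S) {β : ℝ} (hβ : 0 ≤ β)
    (hbound : ∀ T, Zpart W (Λ \ T) (fun y => -p y) ≤ β * Zpart W T μ)
    (htight : β * Zpart W (insert x S) μ ≤ Zpart W (Λ \ insert x S) (fun y => -p y)) :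
    β * Zpart W S μ ≤ Zpart W (Λ \ S) (fun y => -p y) := by
  by_cases hxΛ : x ∈ Λ
  · set Γ := Γstar W x
    have hxΓ : x ∈ Γ := by simp [Γ, Γstar, hdiag]
    have hrec : Zpart W (Λ \ S) (fun y => -p y) =
        Zpart W (Λ \ insert x S) (fun y => -p y) - p x * Zpart W ((Λ \ S) \ Γ) (fun y => -p y) := by
      rw [Zpart_eq_Zpart_erase_add hsym hdiag h01 _ (mem_sdiff.2 ⟨hxΛ, hxS⟩), sdiff_insert]
      ring
    have hrecμ : Zpart W (insert x S) μ = Zpart W S μ + μ x * Zpart W (S \ Γ) μ := by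
      rw [Zpart_eq_Zpart_erase_add hsym hdiag h01 μ (mem_insert_self x S), erase_insert hxS,
        insert_sdiff_of_mem S hxΓ]
    have hZΓ : 0 ≤ β * Zpart W (S \ Γ) μ := mul_nonneg hβ (Zpart_pos W hμ _).le
    have hcompat : p x * Zpart W ((Λ \ S) \ Γ) (fun y => -p y) ≤ β * Zpart W (S \ Γ) μ * μ x :=
      calc p x * Zpart W ((Λ \ S) \ Γ) (fun y => -p y)
          ≤ p x * (β * Zpart W (S ∪ Γ) μ) := by
            rw [sdiff_sdiff_left]
            exact mul_le_mul_of_nonneg_left (hbound _) (hp x)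
        _ ≤ p x * (β * (Zpart W (S \ Γ) μ * Zpart W Γ μ)) := by
            gcongr
            · exact hp x
            · exact Zpart_le_mul_of_subset_union W hμ sdiff_union_self_eq_union.symm.subset
        _ = β * Zpart W (S \ Γ) μ * (p x * Zpart W Γ μ) := by ring
        _ ≤ β * Zpart W (S \ Γ) μ * μ x := mul_le_mul_of_nonneg_left (hFP x) hZΓ
    rw [hrecμ] at htight
    linarith
  · rw [sdiff_insert_of_notMem hxΛ] at htight
    exact (mul_le_mul_of_nonneg_left (Zpart_mono W hμ (subset_insert x S)) hβ).trans htight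

theorem Zpart_neg_sdiff_le_mul (hsym : ∀ x y, W x y = W y x)
    (hdiag : ∀ x, W x x = 0) (h01 : ∀ x y, W x y = 0 ∨ W x y = 1) (hμ : ∀ x, 0 ≤ μ x)
    (hp : ∀ x, 0 ≤ p x) (hFP : ∀ x, p x * Zpart W (Γstar W x) μ ≤ μ x) (Λ S : Finset P) :
    Zpart W (Λ \ S) (fun y => -p y) ≤ Zpart W S μ * Zpart W Λ (fun y => -p y) := by
  obtain ⟨S₀, -, hS₀⟩ := exists_max_image univ
    (fun T => Zpart W (Λ \ T) (fun y => -p y) / Zpart W T μ) univ_nonempty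
  set β := Zpart W (Λ \ S₀) (fun y => -p y) / Zpart W S₀ μ
  have hbound : ∀ T, Zpart W (Λ \ T) (fun y => -p y) ≤ β * Zpart W T μ := fun T =>
    (div_le_iff₀ (Zpart_pos W hμ T)).1 (hS₀ T (mem_univ T))
  have hβ : 0 < β := by
    have h := hbound Λ
    rw [Finset.sdiff_self, Zpart_empty] at h
    exact pos_of_mul_pos_left (one_pos.trans_le h) (Zpart_pos W hμ Λ).le
  have hdescend : ∀ T, β * Zpart W T μ ≤ Zpart W (Λ \ T) (fun y => -p y) →
      β ≤ Zpart W Λ (fun y => -p y) := by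
    intro T
    induction T using Finset.induction_on with
    | empty => simp
    | insert x T hx ih =>
      exact fun h => ih (mul_Zpart_le_Zpart_sdiff_of_insert hsym hdiag h01 hμ hp hFP hx hβ.le
        hbound h)
  have hβΛ := hdescend S₀
    (div_mul_cancel₀ (Zpart W (Λ \ S₀) (fun y => -p y)) (Zpart_pos W hμ S₀).ne').le
  calc Zpart W (Λ \ S) (fun y => -p y) ≤ β * Zpart W S μ := hbound S
    _ ≤ Zpart W S μ * Zpart W Λ (fun y => -p y) := by
      rw [mul_comm]
      exact mul_le_mul_of_nonneg_left hβΛ (Zpart_pos W hμ S).le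

end NegativeActivities

theorem Zpart_neg_pos {P : Type*} [Fintype P] [DecidableEq P] (W : P → P → ℕ)
    (hsym : ∀ x y, W x y = W y x) (hdiag : ∀ x, W x x = 0)
    (h01 : ∀ x y, W x y = 0 ∨ W x y = 1)
    (μ p : P → ℝ) (hμ : ∀ x, 0 ≤ μ x) (hp : ∀ x, 0 ≤ p x)
    (hFP : ∀ x, p x * Zpart W (Γstar W x) μ ≤ μ x)
    (Λ : Finset P) :
    0 < Zpart W Λ (fun y => -p y) ∧
      ∀ x ∈ Λ, Zpart W (Λ.erase x) (fun y => -p y) ≤ (1 + μ x) * Zpart W Λ (fun y => -p y) := by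
  have hkey := Zpart_neg_sdiff_le_mul hsym hdiag h01 hμ hp hFP Λ
  have hpos : 0 < Zpart W Λ (fun y => -p y) := by
    have h := hkey Λ
    rw [Finset.sdiff_self, Zpart_empty] at h
    exact pos_of_mul_pos_right (one_pos.trans_le h) (Zpart_pos W hμ Λ).le
  refine ⟨hpos, fun x hx => ?_⟩
  have hrec := Zpart_eq_Zpart_erase_add hsym hdiag h01 (fun y => -p y) hx
  have hΓ : p x * Zpart W (Λ \ Γstar W x) (fun y => -p y) ≤ μ x * Zpart W Λ (fun y => -p y) :=
    calc p x * Zpart W (Λ \ Γstar W x) (fun y => -p y)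
        ≤ p x * (Zpart W (Γstar W x) μ * Zpart W Λ (fun y => -p y)) :=
          mul_le_mul_of_nonneg_left (hkey _) (hp x)
      _ = p x * Zpart W (Γstar W x) μ * Zpart W Λ (fun y => -p y) := (mul_assoc _ _ _).symm
      _ ≤ μ x * Zpart W Λ (fun y => -p y) := mul_le_mul_of_nonneg_right (hFP x) hpos.le
  linarith
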